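/- arXiv:1909.07800 — 2 statements merged into one kernel-verified Lean document; each statement's English description precedes it below -/
import Mathlib

section
/- Let A and B be groups and W ⊆ F_∞ a set of words. If W(A) = {1} and W(B) = {1}, then W(A ∗ B) ⊆ [A,B]. -/
open Monoid
open scoped commutatorElement

/-- The verbal subgroup `W(G)`: the subgroup of `G` generated by all evaluations of the
words of `W` at tuples of elements of `G`. -/
def verbalSubgroup (W : Set (FreeGroup ℕ)) (G : Type*) [Group G] : Subgroup G :=
  Subgroup.closure {x | ∃ w ∈ W, ∃ f : ℕ → G, FreeGroup.lift f w = x}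

/-- The subgroup `[A,B]` of the free product `A ∗ B` generated by the commutators
`[a,b] = a * b * a⁻¹ * b⁻¹` with `a ∈ A`, `b ∈ B`. -/
def commSubgroup (A B : Type*) [Group A] [Group B] : Subgroup (Coprod A B) :=
  Subgroup.closure {x | ∃ (a : A) (b : B), x = ⁅(Coprod.inl a : Coprod A B), Coprod.inr b⁆}

/-!
A word map commutes with every homomorphism, so `W(A ∗ B)` lies in the kernels of the two
projections `A ∗ B → A` and `A ∗ B → B`, i.e. in the kernel of `A ∗ B → A × B`. That kernel
is `[A,B]`: this subgroup is normal (conjugating `[a', b]` by `a` or by `b'` gives a product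
of two generators), and in the quotient by it the images of `A` and `B` commute, so the
quotient map factors through `A × B`.
-/

section Verbal

variable {G H : Type*} [Group G] [Group H] (W : Set (FreeGroup ℕ))

theorem map_verbalSubgroup_le (φ : G →* H) :
    (verbalSubgroup W G).map φ ≤ verbalSubgroup W H := by
  rw [verbalSubgroup, MonoidHom.map_closure]
  refine Subgroup.closure_mono ?_
  rintro _ ⟨_, ⟨w, hw, f, rfl⟩, rfl⟩
  exact ⟨w, hw, φ ∘ f, (FreeGroup.lift_unique (φ.comp (FreeGroup.lift f)) (by simp)).symm⟩

theorem verbalSubgroup_le_ker_of_eq_bot (φ : G →* H) (h : verbalSubgroup W H = ⊥) :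
    verbalSubgroup W G ≤ φ.ker :=
  (Subgroup.map_eq_bot_iff _).1 (eq_bot_iff.2 (h ▸ map_verbalSubgroup_le W φ))

end Verbal

section CommSubgroup

open Coprod

variable {A B : Type*} [Group A] [Group B]

theorem commutatorElement_inl_inr_mem_commSubgroup (a : A) (b : B) :
    ⁅(inl a : Coprod A B), inr b⁆ ∈ commSubgroup A B :=
  Subgroup.subset_closure ⟨a, b, rfl⟩

theorem range_inl_le_normalizer_commSubgroup :
    (inl : A →* Coprod A B).range ≤ Subgroup.normalizer (commSubgroup A B : Set _) := by
  refine Subgroup.le_normalizer_closure_iff.2 ?_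
  rintro _ ⟨a, rfl⟩ _ ⟨a', b, rfl⟩
  have hconj : (inl a : Coprod A B) * ⁅(inl a' : Coprod A B), inr b⁆ * (inl a)⁻¹ =
      ⁅(inl (a * a') : Coprod A B), inr b⁆ * ⁅(inl a : Coprod A B), inr b⁆⁻¹ := by
    rw [map_mul, commutatorElement_mul_left_eq_conj_mul, mul_inv_cancel_right]
  rw [hconj]
  exact mul_mem (commutatorElement_inl_inr_mem_commSubgroup _ _)
    (inv_mem (commutatorElement_inl_inr_mem_commSubgroup _ _))

theorem range_inr_le_normalizer_commSubgroup :
    (inr : B →* Coprod A B).range ≤ Subgroup.normalizer (commSubgroup A B : Set _) := by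
  refine Subgroup.le_normalizer_closure_iff.2 ?_
  rintro _ ⟨b, rfl⟩ _ ⟨a, b', rfl⟩
  have hconj : (inr b : Coprod A B) * ⁅(inl a : Coprod A B), inr b'⁆ * (inr b)⁻¹ =
      ⁅(inl a : Coprod A B), inr b⁆⁻¹ * ⁅(inl a : Coprod A B), inr (b * b')⁆ := by
    rw [map_mul, commutatorElement_mul_right_eq_mul_conj]; group
  rw [hconj]
  exact mul_mem (inv_mem (commutatorElement_inl_inr_mem_commSubgroup _ _))
    (commutatorElement_inl_inr_mem_commSubgroup _ _)

instance commSubgroup_normal : (commSubgroup A B).Normal := by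
  rw [← Subgroup.normalizer_eq_top_iff, eq_top_iff, ← range_inl_sup_range_inr]
  exact sup_le range_inl_le_normalizer_commSubgroup range_inr_le_normalizer_commSubgroup

theorem ker_toProd_le_commSubgroup :
    (toProd : Coprod A B →* A × B).ker ≤ commSubgroup A B := by
  set q := QuotientGroup.mk' (commSubgroup A B)
  have hcomm (a : A) (b : B) : Commute (q (inl a)) (q (inr b)) := by
    rw [← commutatorElement_eq_one_iff_commute, ← map_commutatorElement,
      QuotientGroup.mk'_apply, QuotientGroup.eq_one_iff]
    exact commutatorElement_inl_inr_mem_commSubgroup a b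
  obtain ⟨φ, hφ⟩ : ∃ φ : A × B →* Coprod A B ⧸ commSubgroup A B, φ.comp toProd = q :=
    ⟨(q.comp inl).noncommCoprod (q.comp inr) hcomm, by ext <;> simp⟩
  calc toProd.ker
      ≤ φ.ker.comap toProd := MonoidHom.ker_le_comap _ _
    _ = commSubgroup A B := by rw [MonoidHom.comap_ker, hφ, QuotientGroup.ker_mk']

end CommSubgroup

/-- If `W(A)` and `W(B)` are trivial then `W(A ∗ B) ⊆ [A,B]`. -/
theorem verbalSubgroup_coprod_le_commSubgroup {A B : Type*} [Group A] [Group B]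
    (W : Set (FreeGroup ℕ)) (hA : verbalSubgroup W A = ⊥) (hB : verbalSubgroup W B = ⊥) :
    verbalSubgroup W (Coprod A B) ≤ commSubgroup A B :=
  calc verbalSubgroup W (Coprod A B)
      ≤ Coprod.fst.ker ⊓ Coprod.snd.ker :=
        le_inf (verbalSubgroup_le_ker_of_eq_bot W _ hA) (verbalSubgroup_le_ker_of_eq_bot W _ hB)
    _ = Coprod.toProd.ker := by rw [← MonoidHom.ker_prod, Coprod.fst_prod_snd]
    _ ≤ commSubgroup A B := ker_toProd_le_commSubgroup
end

section
/- Let A and B be abelian groups, let k ≥ 2, and consider the k-solvable product A ∗_{s_k} B. Then the subgroup [A,B]^w of A ∗_{s_k} B is the free solvable group of derived length k−1 on the set {[a,b] : a ∈ A∖{1}, b ∈ B∖{1}}; that is, [A,B] is a free group with basis {[a,b] : a ∈ A∖{1}, b ∈ B∖{1}}, s_k(A ∗ B) equals the (k−1)-st derived subgroup of [A,B], and [A,B]^w is isomorphic to the quotient of the free group [A,B] by its (k−1)-st derived subgroup. -/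
open Monoid
open scoped commutatorElement

theorem lift_comp_eval {G H : Type*} [Group G] [Group H] (φ : G →* H) (f : ℕ → G)
    (w : FreeGroup ℕ) : φ (FreeGroup.lift f w) = FreeGroup.lift (φ ∘ f) w := by
  have h : φ.comp (FreeGroup.lift f) = FreeGroup.lift (φ ∘ f) :=
    FreeGroup.ext_hom _ _ (fun a => by simp)
  exact DFunLike.congr_fun h w

theorem verbalSubgroup_map_le {G H : Type*} [Group G] [Group H] (W : Set (FreeGroup ℕ))
    (φ : G →* H) : (verbalSubgroup W G).map φ ≤ verbalSubgroup W H := by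
  rw [verbalSubgroup, MonoidHom.map_closure, Subgroup.closure_le]
  rintro x ⟨y, ⟨w, hw, f, rfl⟩, rfl⟩
  exact Subgroup.subset_closure ⟨w, hw, φ ∘ f, (lift_comp_eval φ f w).symm⟩

/-- Verbal subgroups are normal. -/
instance verbalSubgroup_normal (W : Set (FreeGroup ℕ)) (G : Type*) [Group G] :
    (verbalSubgroup W G).Normal := by
  constructor
  intro n hn g
  have h := verbalSubgroup_map_le (G := G) (H := G) W (MulAut.conj g).toMonoidHom
  have h2 : (MulAut.conj g).toMonoidHom n ∈ verbalSubgroup W G := h ⟨n, hn, rfl⟩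
  simpa using h2

/-- The kernel of the verbal product: (the normal closure of) `W(A ∗ B) ∩ [A,B]`.
Since `W(A ∗ B) ∩ [A,B]` is in fact a normal subgroup of `A ∗ B`, taking the normal
closure does not change the subgroup. -/
def verbalProductKer (W : Set (FreeGroup ℕ)) (A B : Type*) [Group A] [Group B] :
    Subgroup (Coprod A B) :=
  Subgroup.normalClosure ((verbalSubgroup W (Coprod A B) ⊓ commSubgroup A B : Subgroup _) : Set _)

instance verbalProductKer_normal (W : Set (FreeGroup ℕ)) (A B : Type*) [Group A] [Group B] :
    (verbalProductKer W A B).Normal := Subgroup.normalClosure_normal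

/-- The verbal product `A ∗_W B := (A ∗ B)/(W(A ∗ B) ∩ [A,B])`. -/
abbrev VerbalProduct (W : Set (FreeGroup ℕ)) (A B : Type*) [Group A] [Group B] : Type _ :=
  Coprod A B ⧸ verbalProductKer W A B

/-- The quotient homomorphism `q : A ∗ B → A ∗_W B`. -/
def vq (W : Set (FreeGroup ℕ)) (A B : Type*) [Group A] [Group B] :
    Coprod A B →* VerbalProduct W A B :=
  QuotientGroup.mk' (verbalProductKer W A B)

/-- The copy of `A` inside the verbal product `A ∗_W B`. -/
def vinl (W : Set (FreeGroup ℕ)) (A B : Type*) [Group A] [Group B] :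
    A →* VerbalProduct W A B := (vq W A B).comp Coprod.inl

/-- The copy of `B` inside the verbal product `A ∗_W B`. -/
def vinr (W : Set (FreeGroup ℕ)) (A B : Type*) [Group A] [Group B] :
    B →* VerbalProduct W A B := (vq W A B).comp Coprod.inr

/-- `[A,B]^w`, the image of `[A,B]` in the verbal product `A ∗_W B`. -/
def commW (W : Set (FreeGroup ℕ)) (A B : Type*) [Group A] [Group B] :
    Subgroup (VerbalProduct W A B) := (commSubgroup A B).map (vq W A B)

/-- The words `s_k` defining solvable products: `s_1 = [x_1, x_2]` and
`s_k(x_1, …, x_{2^k}) = [s_{k-1}(x_1, …, x_{2^{k-1}}), s_{k-1}(x_{2^{k-1}+1}, …, x_{2^k})]`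
(generators indexed from `0`; the second factor is obtained by shifting the generators
by `2^{k-1}`). -/
def sWord : ℕ → FreeGroup ℕ
  | 0 => 1
  | 1 => ⁅FreeGroup.of 0, FreeGroup.of 1⁆
  | (k + 2) => ⁅sWord (k + 1),
      FreeGroup.lift (fun i => FreeGroup.of (i + 2 ^ (k + 1))) (sWord (k + 1))⁆

/-- Iterated derived subgroup of a subgroup `H` of `G`, as a subgroup of `G`. -/
def iteratedDerived {G : Type*} [Group G] (H : Subgroup G) : ℕ → Subgroup G
  | 0 => H
  | (j + 1) => ⁅iteratedDerived H j, iteratedDerived H j⁆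

instance derivedSeries_normal' (G : Type*) [Group G] (n : ℕ) : (derivedSeries G n).Normal :=
  derivedSeries_normal G n

/-!
The subgroup `[A,B]` is the kernel of `A ∗ B → A × B`. Every element of `A ∗ B` can be written
as `w * a * b` with `w` a word in the symbols `[a,b]`, and left multiplication by `x ∈ A` or
`y ∈ B` transforms `w` by `x[a,b]x⁻¹ = [xa,b][x,b]⁻¹` and `y[a,b]y⁻¹ = [a,y]⁻¹[a,yb]`. This
defines an action of `A ∗ B` on triples `(w, a, b)` that recovers the word `w` from its value
in `A ∗ B`, so `[A,B]` is free on the `[a,b]` with `a, b ≠ 1`.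

The commutator of two values of `s_k` in disjoint variables is a value of `s_{k+1}`, so `s_k`
defines the `k`-th derived subgroup in every group. For abelian `A` and `B` the derived subgroup
of `A ∗ B` is `[A,B]`, hence `s_k(A ∗ B)` is the `(k-1)`-st derived subgroup of `[A,B]`; it lies
in `[A,B]`, so the verbal product divides the free group `[A,B]` by exactly this subgroup.
-/

open Subgroup

section Verbal

variable {G H : Type*} [Group G] [Group H]

theorem map_verbalSubgroup_of_surjective (W : Set (FreeGroup ℕ)) {φ : G →* H}
    (hφ : Function.Surjective φ) : (verbalSubgroup W G).map φ = verbalSubgroup W H := by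
  refine le_antisymm (verbalSubgroup_map_le W φ) ?_
  rw [verbalSubgroup, closure_le]
  rintro _ ⟨w, hw, f, rfl⟩
  obtain ⟨g, rfl⟩ := hφ.comp_left f
  exact ⟨_, subset_closure ⟨w, hw, g, rfl⟩, lift_comp_eval φ g w⟩

theorem verbalSubgroup_quotient_eq_bot (W : Set (FreeGroup ℕ)) :
    verbalSubgroup W (G ⧸ verbalSubgroup W G) = ⊥ := by
  rw [← map_verbalSubgroup_of_surjective W (QuotientGroup.mk'_surjective _),
    QuotientGroup.map_mk'_self]

theorem lift_eq_one_of_verbalSubgroup_eq_bot {W : Set (FreeGroup ℕ)}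
    (h : verbalSubgroup W G = ⊥) {w : FreeGroup ℕ} (hw : w ∈ W) (f : ℕ → G) :
    FreeGroup.lift f w = 1 := by
  have hmem : FreeGroup.lift f w ∈ verbalSubgroup W G := subset_closure ⟨w, hw, f, rfl⟩
  rwa [h, mem_bot] at hmem

end Verbal

section SolvableWords

variable {G : Type*} [Group G]

theorem lift_lift_shift (f : ℕ → G) (m : ℕ) (w : FreeGroup ℕ) :
    FreeGroup.lift f (FreeGroup.lift (fun i => FreeGroup.of (i + m)) w)
      = FreeGroup.lift (fun i => f (i + m)) w := by
  rw [lift_comp_eval]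
  congr 2
  funext i
  simp

theorem lift_sWord_succ {k : ℕ} (hk : k ≠ 0) (f : ℕ → G) :
    FreeGroup.lift f (sWord (k + 1))
      = ⁅FreeGroup.lift f (sWord k), FreeGroup.lift (fun i => f (i + 2 ^ k)) (sWord k)⁆ := by
  obtain ⟨j, rfl⟩ := Nat.exists_eq_succ_of_ne_zero hk
  rw [sWord, map_commutatorElement, lift_lift_shift]

theorem lift_sWord_congr {k : ℕ} {f g : ℕ → G} (h : ∀ i < 2 ^ k, f i = g i) :
    FreeGroup.lift f (sWord k) = FreeGroup.lift g (sWord k) := by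
  induction k generalizing f g with
  | zero => simp [sWord]
  | succ k ih =>
    rcases eq_or_ne k 0 with rfl | hk
    · simp [sWord, h 0 (by norm_num), h 1 (by norm_num)]
    · rw [lift_sWord_succ hk, lift_sWord_succ hk, ih fun i hi => h i (by omega),
        ih fun i hi => h _ (by rw [pow_succ]; omega)]

theorem commutatorElement_lift_sWord {k : ℕ} (hk : k ≠ 0) (f g : ℕ → G) :
    ⁅FreeGroup.lift f (sWord k), FreeGroup.lift g (sWord k)⁆
      = FreeGroup.lift (fun i => if i < 2 ^ k then f i else g (i - 2 ^ k)) (sWord (k + 1)) := by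
  rw [lift_sWord_succ hk, lift_sWord_congr fun i hi => if_pos hi]
  congr 3
  funext i
  simp

theorem lift_sWord_mem_derivedSeries {k : ℕ} (hk : 1 ≤ k) (f : ℕ → G) :
    FreeGroup.lift f (sWord k) ∈ derivedSeries G k := by
  induction k, hk using Nat.le_induction generalizing f with
  | base =>
    rw [sWord, map_commutatorElement, derivedSeries_one]
    exact commutator_mem_commutator (mem_top _) (mem_top _)
  | succ k hk ih =>
    rw [lift_sWord_succ (by omega), derivedSeries_succ]
    exact commutator_mem_commutator (ih f) (ih _)

theorem verbalSubgroup_sWord_le_derivedSeries {k : ℕ} (hk : 1 ≤ k) :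
    verbalSubgroup {sWord k} G ≤ derivedSeries G k := by
  rw [verbalSubgroup, closure_le]
  rintro _ ⟨w, rfl, f, rfl⟩
  exact lift_sWord_mem_derivedSeries hk f

theorem commutator_verbalSubgroup_sWord_eq_bot {k : ℕ} (hk : k ≠ 0)
    (h : verbalSubgroup {sWord (k + 1)} G = ⊥) :
    ⁅verbalSubgroup {sWord k} G, verbalSubgroup {sWord k} G⁆ = ⊥ := by
  rw [commutator_eq_bot_iff_le_centralizer, verbalSubgroup, centralizer_closure, closure_le]
  rintro _ ⟨_, rfl, f, rfl⟩ _ ⟨_, rfl, g, rfl⟩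
  rw [← commutatorElement_eq_one_iff_mul_comm, commutatorElement_lift_sWord hk,
    lift_eq_one_of_verbalSubgroup_eq_bot h rfl]

theorem derivedSeries_le_verbalSubgroup_sWord {k : ℕ} (hk : 1 ≤ k) :
    derivedSeries G k ≤ verbalSubgroup {sWord k} G := by
  induction k, hk using Nat.le_induction generalizing G with
  | base =>
    rw [derivedSeries_one, commutator_def, commutator_le]
    intro g _ h _
    exact subset_closure ⟨_, rfl, fun i => if i = 0 then g else h, by simp [sWord]⟩
  | succ k hk ih =>
    have hQ := commutator_verbalSubgroup_sWord_eq_bot (by omega)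
      (verbalSubgroup_quotient_eq_bot (G := G) {sWord (k + 1)})
    rw [← QuotientGroup.ker_mk' (verbalSubgroup {sWord (k + 1)} G), ← Subgroup.map_eq_bot_iff,
      map_derivedSeries_eq (QuotientGroup.mk'_surjective _), derivedSeries_succ, eq_bot_iff, ← hQ]
    exact commutator_mono ih ih

theorem verbalSubgroup_sWord_eq_derivedSeries {k : ℕ} (hk : 1 ≤ k) :
    verbalSubgroup {sWord k} G = derivedSeries G k :=
  le_antisymm (verbalSubgroup_sWord_le_derivedSeries hk) (derivedSeries_le_verbalSubgroup_sWord hk)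

end SolvableWords

section CartesianSubgroup

variable {A B : Type*} [Group A] [Group B]

abbrev CommBasis (A B : Type*) [Group A] [Group B] : Type _ := {p : A × B // p.1 ≠ 1 ∧ p.2 ≠ 1}

open scoped Classical in
/-- The basis element `[a,b]`, extended by `1` to pairs with `a = 1` or `b = 1`. -/
noncomputable def freeComm (a : A) (b : B) : FreeGroup (CommBasis A B) :=
  if h : a ≠ 1 ∧ b ≠ 1 then FreeGroup.of ⟨(a, b), h⟩ else 1

@[simp] theorem freeComm_one_left (b : B) : freeComm (1 : A) b = 1 := by simp [freeComm]

@[simp] theorem freeComm_one_right (a : A) : freeComm a (1 : B) = 1 := by simp [freeComm]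

theorem of_eq_freeComm (p : CommBasis A B) : FreeGroup.of p = freeComm p.1.1 p.1.2 := by
  simp [freeComm, p.2.1, p.2.2]

theorem lift_freeComm {H : Type*} [Group H] {g : A → B → H} (hg₁ : ∀ b, g 1 b = 1)
    (hg₂ : ∀ a, g a 1 = 1) (a : A) (b : B) :
    FreeGroup.lift (fun p : CommBasis A B => g p.1.1 p.1.2) (freeComm a b) = g a b := by
  by_cases h : a ≠ 1 ∧ b ≠ 1
  · simp [freeComm, h]
  · rw [not_and_or, not_ne_iff, not_ne_iff] at h
    obtain rfl | rfl := h <;> simp [hg₁, hg₂]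

variable (A B) in
noncomputable def commHom : FreeGroup (CommBasis A B) →* Coprod A B :=
  FreeGroup.lift fun p => ⁅(Coprod.inl p.1.1 : Coprod A B), Coprod.inr p.1.2⁆

@[simp] theorem commHom_freeComm (a : A) (b : B) :
    commHom A B (freeComm a b) = ⁅(Coprod.inl a : Coprod A B), Coprod.inr b⁆ :=
  lift_freeComm (g := fun a b => ⁅(Coprod.inl a : Coprod A B), Coprod.inr b⁆)
    (by simp) (by simp) a b

/-- Conjugation by `x ∈ A` on `[A,B]`, read off `x [a,b] x⁻¹ = [x a, b] [x, b]⁻¹`. -/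
noncomputable def conjLeft (x : A) : FreeGroup (CommBasis A B) →* FreeGroup (CommBasis A B) :=
  FreeGroup.lift fun p => freeComm (x * p.1.1) p.1.2 * (freeComm x p.1.2)⁻¹

/-- Conjugation by `y ∈ B` on `[A,B]`, read off `y [a,b] y⁻¹ = [a, y]⁻¹ [a, y b]`. -/
noncomputable def conjRight (y : B) : FreeGroup (CommBasis A B) →* FreeGroup (CommBasis A B) :=
  FreeGroup.lift fun p => (freeComm p.1.1 y)⁻¹ * freeComm p.1.1 (y * p.1.2)

@[simp] theorem conjLeft_freeComm (x a : A) (b : B) :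
    conjLeft x (freeComm a b) = freeComm (x * a) b * (freeComm x b)⁻¹ :=
  lift_freeComm (g := fun a b => freeComm (x * a) b * (freeComm x b)⁻¹) (by simp) (by simp) a b

@[simp] theorem conjRight_freeComm (y : B) (a : A) (b : B) :
    conjRight y (freeComm a b) = (freeComm a y)⁻¹ * freeComm a (y * b) :=
  lift_freeComm (g := fun a b => (freeComm a y)⁻¹ * freeComm a (y * b)) (by simp) (by simp) a b

theorem conjLeft_one : conjLeft (1 : A) = MonoidHom.id (FreeGroup (CommBasis A B)) := by
  ext p
  simp [of_eq_freeComm p]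

theorem conjRight_one : conjRight (1 : B) = MonoidHom.id (FreeGroup (CommBasis A B)) := by
  ext p
  simp [of_eq_freeComm p]

theorem conjLeft_mul (x y : A) :
    conjLeft (x * y) = (conjLeft x).comp (conjLeft y : FreeGroup (CommBasis A B) →* _) := by
  ext p
  simp [of_eq_freeComm p, mul_assoc]

theorem conjRight_mul (x y : B) :
    conjRight (x * y) = (conjRight x).comp (conjRight y : FreeGroup (CommBasis A B) →* _) := by
  ext p
  simp [of_eq_freeComm p, mul_assoc]

theorem conjLeft_conjRight_conjLeft_inv_conjRight_inv (a : A) (b : B)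
    (c : FreeGroup (CommBasis A B)) :
    conjLeft a (conjRight b (conjLeft a⁻¹ (conjRight b⁻¹ c))) =
      freeComm a b * c * (freeComm a b)⁻¹ := by
  suffices (conjLeft a).comp ((conjRight b).comp ((conjLeft a⁻¹).comp (conjRight b⁻¹))) =
      (MulAut.conj (freeComm a b)).toMonoidHom from DFunLike.congr_fun this c
  ext p
  simp [of_eq_freeComm p]
  group

theorem commHom_conjLeft (x : A) (c : FreeGroup (CommBasis A B)) :
    commHom A B (conjLeft x c) = Coprod.inl x * commHom A B c * (Coprod.inl x)⁻¹ := by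
  suffices (commHom A B).comp (conjLeft x) =
      (MulAut.conj (Coprod.inl x : Coprod A B)).toMonoidHom.comp (commHom A B) from
    DFunLike.congr_fun this c
  ext p
  simp [of_eq_freeComm p, commutatorElement_def]
  group

theorem commHom_conjRight (y : B) (c : FreeGroup (CommBasis A B)) :
    commHom A B (conjRight y c) = Coprod.inr y * commHom A B c * (Coprod.inr y)⁻¹ := by
  suffices (commHom A B).comp (conjRight y) =
      (MulAut.conj (Coprod.inr y : Coprod A B)).toMonoidHom.comp (commHom A B) from
    DFunLike.congr_fun this c
  ext p
  simp [of_eq_freeComm p, commutatorElement_def]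
  group


variable (A B) in
/-- `A` acts on triples `(w, a, b)`, standing for `commHom w * a * b`, by left multiplication. -/
noncomputable def leftAct : A →* Function.End (FreeGroup (CommBasis A B) × A × B) where
  toFun x t := (conjLeft x t.1, x * t.2.1, t.2.2)
  map_one' := by
    funext t
    simp [conjLeft_one]
    rfl
  map_mul' x y := by
    funext t
    simp [conjLeft_mul, mul_assoc]
    rfl

variable (A B) in
/-- `y * (w * a * b) = (y w y⁻¹) * [a, y]⁻¹ * a * (y * b)`. -/
noncomputable def rightAct : B →* Function.End (FreeGroup (CommBasis A B) × A × B) where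
  toFun y t := (conjRight y t.1 * (freeComm t.2.1 y)⁻¹, t.2.1, y * t.2.2)
  map_one' := by
    funext t
    simp [conjRight_one]
    rfl
  map_mul' y y' := by
    funext t
    change _ = (conjRight y (conjRight y' t.1 * (freeComm t.2.1 y')⁻¹) * (freeComm t.2.1 y)⁻¹,
      t.2.1, y * (y' * t.2.2))
    simp [conjRight_mul, mul_assoc]

variable (A B) in
noncomputable def cartesianAct : Coprod A B →* Equiv.Perm (FreeGroup (CommBasis A B) × A × B) :=
  (Coprod.lift (leftAct A B) (rightAct A B)).toHomPerm

@[simp] theorem cartesianAct_inl (x : A) (t : FreeGroup (CommBasis A B) × A × B) :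
    cartesianAct A B (Coprod.inl x) t = (conjLeft x t.1, x * t.2.1, t.2.2) := rfl

@[simp] theorem cartesianAct_inr (y : B) (t : FreeGroup (CommBasis A B) × A × B) :
    cartesianAct A B (Coprod.inr y) t =
      (conjRight y t.1 * (freeComm t.2.1 y)⁻¹, t.2.1, y * t.2.2) :=
  rfl

variable (A B) in
noncomputable def tripleProd (t : FreeGroup (CommBasis A B) × A × B) : Coprod A B :=
  commHom A B t.1 * Coprod.inl t.2.1 * Coprod.inr t.2.2

theorem mul_tripleProd (g : Coprod A B) (t : FreeGroup (CommBasis A B) × A × B) :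
    g * tripleProd A B t = tripleProd A B (cartesianAct A B g t) := by
  induction g using Coprod.induction_on generalizing t with
  | inl x =>
    simp only [tripleProd, cartesianAct_inl, commHom_conjLeft, map_mul]
    group
  | inr y =>
    simp only [tripleProd, cartesianAct_inr, commHom_conjRight, map_mul, map_inv,
      commHom_freeComm, commutatorElement_def]
    group
  | mul g h hg hh => rw [mul_assoc, hh, hg, map_mul, Equiv.Perm.mul_apply]

theorem cartesianAct_commutator (a : A) (b : B) (c : FreeGroup (CommBasis A B)) :
    cartesianAct A B ⁅(Coprod.inl a : Coprod A B), Coprod.inr b⁆ (c, 1, 1) =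
      (freeComm a b * c, 1, 1) := by
  rw [commutatorElement_def, ← map_inv (Coprod.inl : A →* Coprod A B),
    ← map_inv (Coprod.inr : B →* Coprod A B)]
  simp only [map_mul, Equiv.Perm.mul_apply, cartesianAct_inl, cartesianAct_inr]
  simp [conjLeft_conjRight_conjLeft_inv_conjRight_inv]

theorem cartesianAct_commHom (w c : FreeGroup (CommBasis A B)) :
    cartesianAct A B (commHom A B w) (c, 1, 1) = (w * c, 1, 1) := by
  induction w using FreeGroup.induction_on generalizing c with
  | C1 => simp
  | of p => rw [of_eq_freeComm, commHom_freeComm, cartesianAct_commutator]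
  | inv_of p ih => rw [map_inv, map_inv, Equiv.Perm.inv_eq_iff_eq, ih, mul_inv_cancel_left]
  | mul v w hv hw => rw [map_mul, map_mul, Equiv.Perm.mul_apply, hw, hv, mul_assoc]

theorem commHom_injective : Function.Injective (commHom A B) := by
  intro v w h
  simpa [cartesianAct_commHom] using congrArg (fun g => cartesianAct A B g (1, 1, 1)) h

theorem toProd_commHom (w : FreeGroup (CommBasis A B)) : Coprod.toProd (commHom A B w) = 1 := by
  suffices Coprod.toProd.comp (commHom A B) = 1 from DFunLike.congr_fun this w
  refine FreeGroup.ext_hom _ _ fun p => ?_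
  simp [commHom, commutatorElement_def, Prod.ext_iff]

theorem ker_toProd_le_range_commHom : Coprod.toProd.ker ≤ (commHom A B).range := by
  intro g hg
  set t := cartesianAct A B g (1, 1, 1)
  have hgt : g = tripleProd A B t := by simpa [tripleProd] using mul_tripleProd g (1, 1, 1)
  have ht : t.2 = 1 := by
    simpa [hgt, tripleProd, toProd_commHom, Prod.ext_iff] using hg
  refine ⟨t.1, ?_⟩
  rw [hgt, tripleProd, ht]
  simp

theorem commSubgroup_le_ker_toProd : commSubgroup A B ≤ Coprod.toProd.ker := by
  rw [commSubgroup, closure_le]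
  rintro _ ⟨a, b, rfl⟩
  simp [commutatorElement_def]

theorem range_commHom : (commHom A B).range = commSubgroup A B := by
  refine le_antisymm ?_ (commSubgroup_le_ker_toProd.trans ker_toProd_le_range_commHom)
  rw [commHom, FreeGroup.range_lift_eq_closure, closure_le]
  rintro _ ⟨p, rfl⟩
  exact subset_closure ⟨p.1.1, p.1.2, rfl⟩

variable (A B) in
noncomputable def commSubgroupEquiv : FreeGroup (CommBasis A B) ≃* commSubgroup A B :=
  (MonoidHom.ofInjective commHom_injective).trans (MulEquiv.subgroupCongr range_commHom)

@[simp] theorem coe_commSubgroupEquiv_of (p : CommBasis A B) :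
    (commSubgroupEquiv A B (FreeGroup.of p) : Coprod A B) =
      ⁅(Coprod.inl p.1.1 : Coprod A B), Coprod.inr p.1.2⁆ :=
  show commHom A B (FreeGroup.of p) = _ from FreeGroup.lift_apply_of

end CartesianSubgroup

theorem commutator_coprod_eq_commSubgroup (A B : Type*) [CommGroup A] [CommGroup B] :
    commutator (Coprod A B) = commSubgroup A B := by
  refine le_antisymm ?_ ?_
  · rw [← range_commHom, commutator_def, commutator_le]
    refine fun g _ h _ => ker_toProd_le_range_commHom ?_
    simp [MonoidHom.mem_ker, commutatorElement_def]
  · rw [commSubgroup, closure_le]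
    rintro _ ⟨a, b, rfl⟩
    exact commutator_mem_commutator (mem_top _) (mem_top _)

section IteratedDerived

variable {F G : Type*} [Group F] [Group G]

theorem iteratedDerived_derivedSeries (m j : ℕ) :
    iteratedDerived (derivedSeries G m) j = derivedSeries G (m + j) := by
  induction j with
  | zero => rfl
  | succ j ih => rw [iteratedDerived, ih, ← add_assoc, derivedSeries_succ]

theorem map_iteratedDerived (f : F →* G) (H : Subgroup F) (j : ℕ) :
    (iteratedDerived H j).map f = iteratedDerived (H.map f) j := by
  induction j with
  | zero => rfl
  | succ j ih => rw [iteratedDerived, iteratedDerived, map_commutator, ih]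

theorem map_derivedSeries_eq_iteratedDerived_range (f : F →* G) (j : ℕ) :
    (derivedSeries F j).map f = iteratedDerived f.range j := by
  have h := iteratedDerived_derivedSeries (G := F) 0 j
  rw [derivedSeries_zero, zero_add] at h
  rw [MonoidHom.range_eq_map, ← map_iteratedDerived, h]

end IteratedDerived

noncomputable def rangeMapMkEquiv {F G : Type*} [Group F] [Group G] {f : F →* G}
    (hf : Function.Injective f) {M : Subgroup F} [M.Normal] {N : Subgroup G} [N.Normal]
    (h : M.map f = N) : f.range.map (QuotientGroup.mk' N) ≃* F ⧸ M :=
  have hker : ((QuotientGroup.mk' N).comp f).ker = M := by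
    rw [← MonoidHom.comap_ker, QuotientGroup.ker_mk', ← h, comap_map_eq_self_of_injective hf]
  (MulEquiv.subgroupCongr (MonoidHom.range_comp _ _)).symm.trans
    ((QuotientGroup.quotientKerEquivRange _).symm.trans (QuotientGroup.quotientMulEquivOfEq hker))

theorem verbalProductKer_eq_verbalSubgroup {W : Set (FreeGroup ℕ)} {A B : Type*} [Group A]
    [Group B] (h : verbalSubgroup W (Coprod A B) ≤ commSubgroup A B) :
    verbalProductKer W A B = verbalSubgroup W (Coprod A B) := by
  rw [verbalProductKer, inf_of_le_left h, normalClosure_eq_self]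

/-- For abelian `A`, `B` and `k ≥ 2`, `[A,B]^w ⊆ A ∗_{s_k} B` is the free solvable group
of derived length `k-1` on `{[a,b] : a ≠ 1, b ≠ 1}`: `[A,B]` is free with that basis,
`s_k(A ∗ B)` is the `(k-1)`-st derived subgroup of `[A,B]`, and `[A,B]^w` is isomorphic
to the quotient of the free group on that basis by the `(k-1)`-st term of its derived
series. -/
theorem solvableProduct_commW_free_solvable {A B : Type*} [CommGroup A] [CommGroup B]
    (k : ℕ) (hk : 2 ≤ k) :
    (∃ e : FreeGroup {p : A × B // p.1 ≠ 1 ∧ p.2 ≠ 1} ≃* commSubgroup A B,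
      ∀ p : {p : A × B // p.1 ≠ 1 ∧ p.2 ≠ 1},
        (e (FreeGroup.of p) : Coprod A B) =
          ⁅(Coprod.inl p.1.1 : Coprod A B), Coprod.inr p.1.2⁆) ∧
    verbalSubgroup {sWord k} (Coprod A B) = iteratedDerived (commSubgroup A B) (k - 1) ∧
    Nonempty ((commW {sWord k} A B) ≃*
      (FreeGroup {p : A × B // p.1 ≠ 1 ∧ p.2 ≠ 1} ⧸
        derivedSeries (FreeGroup {p : A × B // p.1 ≠ 1 ∧ p.2 ≠ 1}) (k - 1))) := by
  have hV : verbalSubgroup {sWord k} (Coprod A B) = derivedSeries (Coprod A B) k :=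
    verbalSubgroup_sWord_eq_derivedSeries (by omega)
  have hC : derivedSeries (Coprod A B) 1 = commSubgroup A B :=
    commutator_coprod_eq_commSubgroup A B
  have hVC :
      verbalSubgroup {sWord k} (Coprod A B) = iteratedDerived (commSubgroup A B) (k - 1) := by
    rw [hV, ← hC, iteratedDerived_derivedSeries]
    congr 1
    omega
  have hker : (derivedSeries _ (k - 1)).map (commHom A B) = verbalProductKer {sWord k} A B := by
    rw [verbalProductKer_eq_verbalSubgroup (hV ▸ hC ▸ derivedSeries_antitone _ (by omega)), hVC,
      map_derivedSeries_eq_iteratedDerived_range, range_commHom]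
  refine ⟨⟨commSubgroupEquiv A B, coe_commSubgroupEquiv_of⟩, hVC, ⟨?_⟩⟩
  rw [commW, vq, ← range_commHom]
  exact rangeMapMkEquiv commHom_injective hker
end
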